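/- arXiv:1409.5898 — 5 statements merged into one kernel-verified Lean document; each statement's English description precedes it below -/
import Mathlib

section
/- Let A₁,...,A_d ∈ M_m(ℂ) be positive semidefinite matrices. Then the polynomial q(z, z₁,...,z_d) = det(z·1_m + Σ_{i=1}^d z_i A_i) in d+1 variables has real coefficients and is real stable. -/
/-!
Since the `Aᵢ` are Hermitian, conjugating the coefficients of `z₀ • 1 + ∑ zᵢ • Aᵢ` transposes it,
so its determinant is fixed by conjugation and has real coefficients. For `z ∈ ℍ^(d+1)` and `v ≠ 0`,
`Im (v* M v) = Im z₀ ‖v‖² + ∑ Im zᵢ (v* Aᵢ v) > 0` for `M = z₀ • 1 + ∑ zᵢ • Aᵢ`, so `M v ≠ 0`.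
-/

open MvPolynomial Matrix
open scoped ComplexOrder

namespace Matrix

variable {n : Type*} [Fintype n]

theorem det_ne_zero_of_forall_im_pos [DecidableEq n] {M : Matrix n n ℂ}
    (hM : ∀ v ≠ 0, 0 < (star v ⬝ᵥ M *ᵥ v).im) : M.det ≠ 0 := by
  intro hdet
  obtain ⟨v, hv, hMv⟩ := exists_mulVec_eq_zero_iff.mpr hdet
  simpa [hMv] using hM v hv

theorem IsHermitian.im_star_dotProduct_smul_mulVec {A : Matrix n n ℂ} (hA : A.IsHermitian)
    (z : ℂ) (v : n → ℂ) :
    (star v ⬝ᵥ (z • A) *ᵥ v).im = z.im * (star v ⬝ᵥ A *ᵥ v).re := by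
  have : (star v ⬝ᵥ A *ᵥ v).im = 0 := hA.im_star_dotProduct_mulVec_self v
  simp [smul_mulVec, this]

theorem im_star_dotProduct_pencil_mulVec_pos {ι : Type*} [Fintype ι] {B : Matrix n n ℂ}
    (hB : B.PosDef) {A : ι → Matrix n n ℂ} (hA : ∀ i, (A i).PosSemidef) {w : ℂ} (hw : 0 < w.im)
    {z : ι → ℂ} (hz : ∀ i, 0 ≤ (z i).im) {v : n → ℂ} (hv : v ≠ 0) :
    0 < (star v ⬝ᵥ (w • B + ∑ i, z i • A i) *ᵥ v).im := by
  have hBv : 0 < (star v ⬝ᵥ B *ᵥ v).re := (Complex.pos_iff.mp (hB.dotProduct_mulVec_pos hv)).1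
  have hAv (i) : 0 ≤ (star v ⬝ᵥ A i *ᵥ v).re :=
    (Complex.nonneg_iff.mp ((hA i).dotProduct_mulVec_nonneg v)).1
  rw [add_mulVec, dotProduct_add, sum_mulVec, dotProduct_sum, Complex.add_im, Complex.im_sum,
    hB.isHermitian.im_star_dotProduct_smul_mulVec]
  simp only [fun i ↦ (hA i).isHermitian.im_star_dotProduct_smul_mulVec]
  exact add_pos_of_pos_of_nonneg (mul_pos hw hBv)
    (Finset.sum_nonneg fun i _ ↦ mul_nonneg (hz i) (hAv i))

end Matrix

theorem MvPolynomial.im_coeff_det_eq_zero {n σ : Type*} [Fintype n] [DecidableEq n]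
    {P : Matrix n n (MvPolynomial σ ℂ)} (hP : P.map (map (starRingEnd ℂ)) = Pᵀ)
    (s : σ →₀ ℕ) : (P.det.coeff s).im = 0 := by
  have hdet : map (starRingEnd ℂ) P.det = P.det := by
    rw [RingHom.map_det, RingHom.mapMatrix_apply, hP, det_transpose]
  rw [← Complex.conj_eq_iff_im, ← coeff_map, hdet]

section Pencil

variable {n : Type*} [DecidableEq n] {d : ℕ}

noncomputable def linearPencil (A : Fin d → Matrix n n ℂ) :
    Matrix n n (MvPolynomial (Fin (d + 1)) ℂ) :=
  Matrix.of fun a b => (if a = b then X 0 else 0) + ∑ i : Fin d, X i.succ * C (A i a b)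

theorem linearPencil_map_conj {A : Fin d → Matrix n n ℂ} (hA : ∀ i, (A i).IsHermitian) :
    (linearPencil A).map (map (starRingEnd ℂ)) = (linearPencil A)ᵀ := by
  ext a b : 2
  have hconj (i) : starRingEnd ℂ (A i a b) = A i b a := (hA i).apply b a
  simp only [linearPencil, map_apply, transpose_apply, of_apply, map_add, map_sum, map_mul,
    map_X, map_C, apply_ite (map (starRingEnd ℂ)), map_zero, eq_comm (a := a), hconj]

theorem linearPencil_map_eval (A : Fin d → Matrix n n ℂ) (z : Fin (d + 1) → ℂ) :
    (linearPencil A).map (eval z) = z 0 • 1 + ∑ i, z i.succ • A i := by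
  ext a b
  simp [linearPencil, one_apply, Matrix.sum_apply, apply_ite (eval z)]

end Pencil

/-- For positive semidefinite matrices `A₁, ..., A_d ∈ M_m(ℂ)`, the polynomial
`q(z, z₁, ..., z_d) = det(z·1_m + ∑ᵢ zᵢ Aᵢ)` (variable `0` of `Fin (d+1)` playing the role of `z`
and variable `i.succ` the role of `zᵢ`) has real coefficients and has no zero in `ℍ^(d+1)`,
i.e. it is real stable. -/
theorem statement0 {m d : ℕ} (A : Fin d → Matrix (Fin m) (Fin m) ℂ)
    (hA : ∀ i, (A i).PosSemidef) :
    (∀ s : (Fin (d + 1)) →₀ ℕ,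
      ((Matrix.det (Matrix.of fun a b : Fin m =>
          (if a = b then (X 0 : MvPolynomial (Fin (d + 1)) ℂ) else 0) +
            ∑ i : Fin d, X i.succ * C (A i a b))).coeff s).im = 0) ∧
    (∀ z : Fin (d + 1) → ℂ, (∀ i, 0 < (z i).im) →
      eval z (Matrix.det (Matrix.of fun a b : Fin m =>
          (if a = b then (X 0 : MvPolynomial (Fin (d + 1)) ℂ) else 0) +
            ∑ i : Fin d, X i.succ * C (A i a b))) ≠ 0) := by
  refine ⟨im_coeff_det_eq_zero (linearPencil_map_conj fun i ↦ (hA i).isHermitian), ?_⟩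
  intro z hz
  change eval z (linearPencil A).det ≠ 0
  rw [RingHom.map_det, RingHom.mapMatrix_apply, linearPencil_map_eval]
  exact det_ne_zero_of_forall_im_pos fun v hv ↦
    im_star_dotProduct_pencil_mulVec_pos PosDef.one hA (hz 0) (fun i ↦ (hz i.succ).le) hv
end

section
/- Let p(z₁,...,z_d) be a real stable polynomial and let t ∈ ℝ. Then the polynomial (1 + t·∂_d)p, where ∂_d denotes partial differentiation with respect to the d-th variable, is real stable. -/
open MvPolynomial

/-- A polynomial with real coefficients in `n` variables is real stable if, viewed over `ℂ`,
it has no zero in `ℍ^n` where `ℍ` is the open upper half-plane. -/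
def RealStable {n : ℕ} (p : MvPolynomial (Fin n) ℝ) : Prop :=
  ∀ z : Fin n → ℂ, (∀ i, 0 < (z i).im) →
    eval z (map (algebraMap ℝ ℂ) p) ≠ 0

/-!
Fix `z ∈ ℍⁿ` and restrict `p` to the complex line through `z` parallel to the `i`-th axis. The
resulting univariate `q` has no zeros in `ℍ`, so all its roots lie in the closed lower half-plane,
and for `w ∈ ℍ` the logarithmic derivative `q'(w)/q(w) = ∑ 1/(w - r)` has negative imaginary part
unless `q` has no roots at all. Hence `q(w) + t q'(w) = q(w) (1 + t q'(w)/q(w))` cannot vanish for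
real `t`.
-/

lemma Complex.im_one_div_sub_neg {w z : ℂ} (hw : 0 < w.im) (hz : z.im ≤ 0) :
    (1 / (w - z)).im < 0 := by
  have hwz : 0 < (w - z).im := by rw [Complex.sub_im]; linarith
  rw [one_div, Complex.inv_im]
  exact div_neg_of_neg_of_pos (neg_neg_of_pos hwz)
    (Complex.normSq_pos.mpr fun h ↦ by simp [h] at hwz)

lemma Complex.im_multiset_sum_one_div_sub_neg {w : ℂ} (hw : 0 < w.im) {s : Multiset ℂ}
    (hs : ∀ z ∈ s, z.im ≤ 0) (hs₀ : s ≠ 0) :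
    (s.map fun z ↦ 1 / (w - z)).sum.im < 0 := by
  have := Multiset.sum_lt_sum_of_nonempty (f := fun z ↦ (1 / (w - z)).im) (g := fun _ ↦ 0) hs₀
    fun z hz ↦ im_one_div_sub_neg hw (hs z hz)
  rw [← Complex.coe_imAddGroupHom, map_multiset_sum, Multiset.map_map]
  simpa using this

namespace Polynomial

theorem eval_add_mul_derivative_ne_zero {q : ℂ[X]} (hq : ∀ w : ℂ, 0 < w.im → q.eval w ≠ 0)
    (t : ℝ) {w : ℂ} (hw : 0 < w.im) : q.eval w + t * q.derivative.eval w ≠ 0 := by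
  set S := (q.roots.map fun z ↦ 1 / (w - z)).sum
  have hS : q.derivative.eval w = q.eval w * S :=
    (IsAlgClosed.splits q).eval_derivative_eq_eval_mul_sum (hq w hw)
  have hroots : ∀ z ∈ q.roots, z.im ≤ 0 := fun z hz ↦
    not_lt.mp fun him ↦ hq z him (isRoot_of_mem_roots hz)
  suffices 1 + t * S ≠ 0 by
    rw [hS, mul_left_comm, ← mul_one_add]
    exact mul_ne_zero (hq w hw) this
  rcases eq_or_ne q.roots 0 with h₀ | h₀
  · simp [S, h₀]
  intro h
  have him : t * S.im = 0 := by simpa using congrArg Complex.im h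
  have hre : 1 + t * S.re = 0 := by simpa using congrArg Complex.re h
  have ht : t ≠ 0 := by rintro rfl; simp at hre
  exact (Complex.im_multiset_sum_one_div_sub_neg hw hroots h₀).ne
    ((mul_eq_zero.mp him).resolve_left ht)

end Polynomial

namespace MvPolynomial

variable {R σ : Type*} [CommSemiring R] [DecidableEq σ]

noncomputable def restrictLine (i : σ) (z : σ → R) : MvPolynomial σ R →ₐ[R] Polynomial R :=
  aeval (Function.update (fun j ↦ Polynomial.C (z j)) i Polynomial.X)

theorem eval_restrictLine (i : σ) (z : σ → R) (P : MvPolynomial σ R) (w : R) :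
    (restrictLine i z P).eval w = eval (Function.update z i w) P := by
  rw [restrictLine, ← Polynomial.coe_aeval_eq_eval, comp_aeval_apply, aeval_eq_eval]
  congr
  funext j
  rw [Function.apply_update (fun _ ↦ Polynomial.aeval w)]
  simp

theorem derivative_restrictLine (i : σ) (z : σ → R) (P : MvPolynomial σ R) :
    Polynomial.derivative (restrictLine i z P) = restrictLine i z (pderiv i P) := by
  induction P using MvPolynomial.induction_on with
  | C a => simp
  | add p q hp hq => simp [hp, hq]
  | mul_X p j hp =>
    rw [map_mul, Polynomial.derivative_mul, hp, pderiv_mul, map_add, map_mul, map_mul, pderiv_X]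
    rcases eq_or_ne j i with rfl | h
    · simp [restrictLine]
    · simp [restrictLine, h]

end MvPolynomial

theorem RealStable.add_C_mul_pderiv {n : ℕ} {p : MvPolynomial (Fin n) ℝ} (hp : RealStable p)
    (i : Fin n) (t : ℝ) : RealStable (p + C t * pderiv i p) := by
  intro z hz
  set q := restrictLine i z (map (algebraMap ℝ ℂ) p)
  have hq : ∀ w : ℂ, 0 < w.im → q.eval w ≠ 0 := fun w hw ↦ by
    rw [eval_restrictLine]
    exact hp _ ((Function.forall_update_iff z fun j x ↦ 0 < x.im).mpr ⟨hw, fun j _ ↦ hz j⟩)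
  have := Polynomial.eval_add_mul_derivative_ne_zero hq t (hz i)
  rw [derivative_restrictLine, eval_restrictLine, eval_restrictLine, Function.update_eq_self,
    pderiv_map] at this
  simpa using this

/-- if `p` is a real stable polynomial in `d + 1` variables and `t ∈ ℝ`, then
`(1 + t·∂_d)p = p + t·(∂p/∂z_d)` (derivative in the last variable) is real stable. -/
theorem statement2 {d : ℕ} (p : MvPolynomial (Fin (d + 1)) ℝ)
    (hp : RealStable p) (t : ℝ) :
    RealStable (p + C t * (pderiv (Fin.last d)) p) :=
  hp.add_C_mul_pderiv (Fin.last d) t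
end

section
/- Let p(z) and q(z) be two monic polynomials in one variable of the same degree with real coefficients. Suppose that for every t ∈ [0,1] the polynomial (1−t)p + t q has all of its roots real. Then for every t ∈ [0,1], the largest real root of (1−t)p + t q lies in the closed interval [min(ZM(p), ZM(q)), max(ZM(p), ZM(q))]. -/
/-!
If a monic polynomial `f` of degree `n` has only real roots and all of them are `≤ m`, then
`(x - m) ^ n ≤ f x` for `x ≥ m`, since `f x` is the product of the factors `x - a ≥ x - m`.

Write `f_t = (1 - t) p + t q` and assume `zp ≤ zq`. Beyond `zq` both `p` and `q` are positive, so
every root of `f_t` is `≤ zq`. The parameters `t` for which `f_t` has a root in `[zp, zq]` form a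
closed set `R`, and all other parameters lie in the closed set `L` of those `t` with
`(x - zp) ^ n ≤ f_t x` for all `x ≥ zp`. A parameter in `R ∩ L` must have `zp` as a root of `f_t`,
that is `t q(zp) = 0`. So unless `zp` is a common root of all `f_t`, `R` and `L` split `(0, 1]`;
as `1 ∈ R`, connectedness forces `(0, 1] ⊆ R`, and `0 ∈ R` as well. The largest root of `f_t`
then lies in `[zp, zq]`.
-/

open Polynomial Set

theorem IsCompact.isClosed_setOf_exists_mem {X Y : Type*} [TopologicalSpace X]
    [TopologicalSpace Y] {K : Set Y} (hK : IsCompact K) {S : Set (X × Y)} (hS : IsClosed S) :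
    IsClosed {x | ∃ y ∈ K, (x, y) ∈ S} := by
  have : CompactSpace K := isCompact_iff_compactSpace.mp hK
  have hfst : {x | ∃ y ∈ K, (x, y) ∈ S} = Prod.fst '' {z : X × K | (z.1, (z.2 : Y)) ∈ S} := by
    ext x; simp
  rw [hfst]
  exact isClosedMap_fst_of_compactSpace _ (hS.preimage (by fun_prop))

namespace Polynomial

theorem splits_of_forall_isRoot_map_im_eq_zero {f : ℝ[X]}
    (h : ∀ w : ℂ, (f.map (algebraMap ℝ ℂ)).IsRoot w → w.im = 0) : f.Splits :=
  (IsAlgClosed.splits _).of_splits_map (algebraMap ℝ ℂ) fun w hw =>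
    ⟨w.re, Complex.ext (by simp) (by simp [h w (isRoot_of_mem_roots hw)])⟩

theorem Splits.pow_natDegree_le_eval {R : Type*} [CommRing R] [LinearOrder R]
    [IsStrictOrderedRing R] {f : R[X]} (hf : f.Splits) (hm : f.Monic) {m x : R}
    (hroots : ∀ y, f.IsRoot y → y ≤ m) (hx : m ≤ x) : (x - m) ^ f.natDegree ≤ f.eval x := by
  rw [hf.eval_eq_prod_roots_of_monic hm, hf.natDegree_eq_card_roots, ← Multiset.prod_replicate,
    ← Multiset.map_const']
  refine Multiset.prod_map_le_prod_map₀ _ _ (fun _ _ => sub_nonneg.2 hx) fun y hy => ?_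
  have := hroots y (isRoot_of_mem_roots hy)
  linarith

theorem IsMonicOfDegree.smul_add_smul {R : Type*} [Semiring R] {p q : R[X]} {n : ℕ}
    (hp : IsMonicOfDegree p n) (hq : IsMonicOfDegree q n) {a b : R} (hab : a + b = 1) :
    IsMonicOfDegree (a • p + b • q) n := by
  rcases subsingleton_or_nontrivial R with _ | _
  · simp_all
  rw [isMonicOfDegree_iff] at hp hq ⊢
  refine ⟨(natDegree_add_le _ _).trans (max_le ?_ ?_), ?_⟩
  · exact (natDegree_smul_le _ _).trans hp.1
  · exact (natDegree_smul_le _ _).trans hq.1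
  · simp [hp.2, hq.2, hab]

theorem continuous_eval_smul_add_smul (p q : ℝ[X]) :
    Continuous fun z : ℝ × ℝ => ((1 - z.1) • p + z.1 • q).eval z.2 := by
  simp only [eval_add, eval_smul, smul_eq_mul]
  fun_prop

section ConvexCombination

variable {p q : ℝ[X]} {t : ℝ}

theorem le_of_isRoot_smul_add_smul (hp : p.Monic) (hq : q.Monic) (hps : p.Splits)
    (hqs : q.Splits) {z : ℝ} (hpz : z ∈ upperBounds {x | p.IsRoot x})
    (hqz : z ∈ upperBounds {x | q.IsRoot x}) (ht : t ∈ Icc (0 : ℝ) 1) {x : ℝ}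
    (hx : ((1 - t) • p + t • q).IsRoot x) : x ≤ z := by
  by_contra! hzx
  have hpos : ∀ f : ℝ[X], f.Splits → f.Monic → z ∈ upperBounds {x | f.IsRoot x} → 0 < f.eval x :=
    fun f hfs hf hfz => (pow_pos (sub_pos.2 hzx) _).trans_le
      (hfs.pow_natDegree_le_eval hf (fun _ hy => hfz hy) hzx.le)
  have hP := hpos p hps hp hpz
  have hQ := hpos q hqs hq hqz
  simp only [IsRoot, eval_add, eval_smul, smul_eq_mul] at hx
  nlinarith [mul_nonneg (sub_nonneg.2 ht.2) hP.le, mul_nonneg ht.1 hQ.le, mul_pos hP hQ]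

theorem exists_isRoot_smul_add_smul_mem_Icc (hp : p.Monic) (hq : q.Monic)
    (hdeg : p.natDegree = q.natDegree)
    (hsplit : ∀ s ∈ Icc (0 : ℝ) 1, ((1 - s) • p + s • q).Splits) {zp zq : ℝ}
    (hpzp : p.IsRoot zp) (hqzq : q.IsRoot zq) (hle : zp ≤ zq)
    (hbound : ∀ s ∈ Icc (0 : ℝ) 1, ∀ x, ((1 - s) • p + s • q).IsRoot x → x ≤ zq)
    (ht : t ∈ Icc (0 : ℝ) 1) : ∃ x ∈ Icc zp zq, ((1 - t) • p + t • q).IsRoot x := by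
  by_cases hqzp : q.IsRoot zp
  · exact ⟨zp, ⟨le_rfl, hle⟩, by simp_all [IsRoot]⟩
  set n := p.natDegree
  set R : Set ℝ := {s | ∃ x ∈ Icc zp zq, ((1 - s) • p + s • q).IsRoot x}
  set L : Set ℝ := ⋂ x ∈ Ici zp, {s | (x - zp) ^ n ≤ ((1 - s) • p + s • q).eval x}
  have hR : IsClosed R := isCompact_Icc.isClosed_setOf_exists_mem
    (isClosed_eq (continuous_eval_smul_add_smul p q) continuous_const)
  have hL : IsClosed L := isClosed_biInter fun x _ => isClosed_le continuous_const
    ((continuous_eval_smul_add_smul p q).comp (Continuous.prodMk_left x))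
  have hmonic (s : ℝ) : IsMonicOfDegree ((1 - s) • p + s • q) n :=
    IsMonicOfDegree.smul_add_smul ⟨rfl, hp⟩ ⟨hdeg.symm, hq⟩ (sub_add_cancel 1 s)
  have hcover : Icc 0 1 ⊆ R ∪ L := by
    intro s hs
    refine or_iff_not_imp_left.2 fun hsR => mem_iInter₂.2 fun x hx => ?_
    have hroots : ∀ y, ((1 - s) • p + s • q).IsRoot y → y ≤ zp := fun y hy => by
      by_contra! hy'
      exact hsR ⟨y, ⟨hy'.le, hbound s hs y hy⟩, hy⟩
    simpa [(hmonic s).natDegree_eq] using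
      (hsplit s hs).pow_natDegree_le_eval (hmonic s).monic hroots hx
  have hdisjoint : ∀ s ∈ Ioc 0 1, s ∈ R → s ∉ L := by
    rintro s hs ⟨x, hx, hroot⟩ hsL
    have hpow : (x - zp) ^ n = 0 :=
      le_antisymm (hroot ▸ mem_iInter₂.1 hsL x hx.1) (pow_nonneg (sub_nonneg.2 hx.1) n)
    obtain rfl : x = zp := by linarith [eq_zero_of_pow_eq_zero hpow]
    exact hqzp (by simpa [IsRoot, hpzp.eq_zero, hs.1.ne'] using hroot)
  by_contra htR
  have h0R : (0 : ℝ) ∈ R := ⟨zp, ⟨le_rfl, hle⟩, by simpa using hpzp⟩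
  have ht0 : t ∈ Ioc 0 1 := ⟨ht.1.lt_of_ne (by rintro rfl; exact htR h0R), ht.2⟩
  have h1R : (1 : ℝ) ∈ R := ⟨zq, ⟨hle, le_rfl⟩, by simpa using hqzq⟩
  obtain ⟨s, hs, hsR, hsL⟩ := isPreconnected_closed_iff.1 isPreconnected_Ioc R L hR hL
    (Ioc_subset_Icc_self.trans hcover) ⟨1, ⟨one_pos, le_rfl⟩, h1R⟩
    ⟨t, ht0, (hcover ht).resolve_left htR⟩
  exact hdisjoint s hs hsR hsL

theorem exists_isGreatest_isRoot_smul_add_smul_mem_Icc (hp : p.Monic) (hq : q.Monic)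
    (hdeg : p.natDegree = q.natDegree)
    (hsplit : ∀ s ∈ Icc (0 : ℝ) 1, ((1 - s) • p + s • q).Splits) {zp zq : ℝ}
    (hzp : IsGreatest {x | p.IsRoot x} zp) (hzq : IsGreatest {x | q.IsRoot x} zq) (hle : zp ≤ zq)
    (ht : t ∈ Icc (0 : ℝ) 1) :
    ∃ zt, IsGreatest {x | ((1 - t) • p + t • q).IsRoot x} zt ∧ zt ∈ Icc zp zq := by
  have hps : p.Splits := by simpa using hsplit 0 ⟨le_rfl, zero_le_one⟩
  have hqs : q.Splits := by simpa using hsplit 1 ⟨zero_le_one, le_rfl⟩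
  have hbound (s : ℝ) (hs : s ∈ Icc (0 : ℝ) 1) (x : ℝ) (hx : ((1 - s) • p + s • q).IsRoot x) :
      x ≤ zq :=
    le_of_isRoot_smul_add_smul hp hq hps hqs (fun _ hy => (hzp.2 hy).trans hle) hzq.2 hs hx
  obtain ⟨x, hx, hroot⟩ :=
    exists_isRoot_smul_add_smul_mem_Icc hp hq hdeg hsplit hzp.1 hzq.1 hle hbound ht
  have hne : (1 - t) • p + t • q ≠ 0 :=
    (IsMonicOfDegree.smul_add_smul ⟨rfl, hp⟩ ⟨hdeg.symm, hq⟩ (sub_add_cancel 1 t)).ne_zero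
  obtain ⟨zt, hzt, hmax⟩ := exists_max_image _ id (finite_setOfPred_isRoot hne) ⟨x, hroot⟩
  exact ⟨zt, ⟨hzt, hmax⟩, hx.1.trans (hmax x hroot), hbound t ht zt hzt⟩

end ConvexCombination

end Polynomial

/-- let `p, q` be monic real polynomials of the same degree such that every convex
combination `(1-t)p + tq`, `t ∈ [0,1]`, has all its (complex) roots real.  If `zp` (resp. `zq`)
is the largest real root of `p` (resp. `q`), then for every `t ∈ [0,1]` the polynomial
`(1-t)p + tq` has a largest real root, and it lies in `[min zp zq, max zp zq]`. -/
theorem statement3 (p q : Polynomial ℝ) (hp : p.Monic) (hq : q.Monic)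
    (hdeg : p.natDegree = q.natDegree)
    (hroots : ∀ t : ℝ, t ∈ Set.Icc (0 : ℝ) 1 → ∀ w : ℂ,
      (Polynomial.map (algebraMap ℝ ℂ) ((1 - t) • p + t • q)).IsRoot w → w.im = 0)
    (zp zq : ℝ)
    (hzp : IsGreatest {x : ℝ | p.IsRoot x} zp)
    (hzq : IsGreatest {x : ℝ | q.IsRoot x} zq) :
    ∀ t : ℝ, t ∈ Set.Icc (0 : ℝ) 1 →
      ∃ zt : ℝ, IsGreatest {x : ℝ | ((1 - t) • p + t • q).IsRoot x} zt ∧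
        zt ∈ Set.Icc (min zp zq) (max zp zq) := by
  intro t ht
  have hsplit (s : ℝ) (hs : s ∈ Icc (0 : ℝ) 1) : ((1 - s) • p + s • q).Splits :=
    splits_of_forall_isRoot_map_im_eq_zero (hroots s hs)
  have hswap (f g : ℝ[X]) (s : ℝ) : (1 - (1 - s)) • f + (1 - s) • g = (1 - s) • g + s • f := by
    rw [sub_sub_cancel, add_comm]
  rcases le_total zp zq with hle | hle
  · rw [min_eq_left hle, max_eq_right hle]
    exact exists_isGreatest_isRoot_smul_add_smul_mem_Icc hp hq hdeg hsplit hzp hzq hle ht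
  · rw [min_eq_right hle, max_eq_left hle, ← hswap q p]
    exact exists_isGreatest_isRoot_smul_add_smul_mem_Icc hq hp hdeg.symm
      (fun s hs => hswap p q s ▸ hsplit (1 - s) (Icc.mem_iff_one_sub_mem.1 hs)) hzq hzp hle
      (Icc.mem_iff_one_sub_mem.1 ht)
end

section
/- Let A₁,...,A_d ∈ M_m(ℂ) be matrices of rank 1 and let A = Σ_{i=1}^d A_i. Then the characteristic polynomial of A equals the mixed characteristic polynomial: p_A(z) = μ[A₁,...,A_d](z). -/
open MvPolynomial

/-- The mixed characteristic polynomial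
`μ[A₁,...,A_d](z) = (∏_{i=1}^d (1 - ∂_{z_i})) det(z·1_m + ∑_i z_i A_i) |_{z₁ = ⋯ = z_d = 0}`.
We work with polynomials in the variables `z₁, ..., z_d` whose coefficients are polynomials in
`z` (so `z` is `Polynomial.X` of the coefficient ring). -/
noncomputable def mixedCharPoly {m d : ℕ} (A : Fin d → Matrix (Fin m) (Fin m) ℂ) :
    Polynomial ℂ :=
  eval (fun _ : Fin d => (0 : Polynomial ℂ))
    ((((List.ofFn fun i : Fin d =>
        (1 : Module.End (Polynomial ℂ) (MvPolynomial (Fin d) (Polynomial ℂ))) -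
          (pderiv i).toLinearMap).prod :
        Module.End (Polynomial ℂ) (MvPolynomial (Fin d) (Polynomial ℂ))))
      (Matrix.det (Matrix.of fun a b : Fin m =>
        (if a = b then (C Polynomial.X : MvPolynomial (Fin d) (Polynomial ℂ)) else 0) +
          ∑ i : Fin d, X i * C (Polynomial.C (A i a b)))))

/-! Write `A_i = u_i v_iᵀ`. By the matrix determinant lemma, `det (z + ∑ z_i A_i)` has degree
at most one in each `z_i`, and on such polynomials `p - ∂_{z_i} p` is `p` with `z_i` shifted
to `z_i - 1`. Hence applying all the operators and evaluating at `0` is evaluating at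
`z_i = -1`, which gives `det (z - ∑ A_i) = p_A(z)`. -/

open Matrix

theorem Matrix.exists_eq_vecMulVec_of_rank_le_one {K m n : Type*} [Field K] [Fintype n]
    (A : Matrix m n K) (hA : A.rank ≤ 1) : ∃ u v, A = vecMulVec u v := by
  have := Module.Finite.span_of_finite K (Set.finite_range A.col)
  rw [rank_eq_finrank_span_cols, finrank_le_one_iff] at hA
  obtain ⟨w, hw⟩ := hA
  choose c hc using fun b => hw ⟨A.col b, Submodule.subset_span (Set.mem_range_self b)⟩
  refine ⟨w, c, Matrix.ext fun a b => ?_⟩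
  simpa [vecMulVec_apply, mul_comm] using (congrFun (congrArg Subtype.val (hc b)) a).symm

theorem Matrix.vecMulVec_map {α β m n : Type*} [NonAssocSemiring α] [NonAssocSemiring β]
    (f : α →+* β) (u : m → α) (v : n → α) :
    (vecMulVec u v).map f = vecMulVec (f ∘ u) (f ∘ v) := by
  ext a b
  simp [vecMulVec_apply]

theorem Matrix.det_add_smul_vecMulVec {R n : Type*} [CommRing R] [Fintype n] [DecidableEq n]
    (N : Matrix n n R) (u v : n → R) (x : R) :
    (N + x • vecMulVec u v).det =
      N.det + x * (fromBlocks N (-replicateCol Unit u) (replicateRow Unit v) 0).det := by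
  -- Bordering `N` by the column `-u` and the row `(x • v, 1)` confines `x` to a single row.
  set T := fromBlocks N (-replicateCol Unit u) (replicateRow Unit v) 0
  set e : n ⊕ Unit → R := Sum.elim 0 1
  have hbordered : (N + x • vecMulVec u v).det =
      (T.updateRow (Sum.inr ()) (x • T (Sum.inr ()) + e)).det := by
    have : T.updateRow (Sum.inr ()) (x • T (Sum.inr ()) + e) =
        fromBlocks N (-replicateCol Unit u) (replicateRow Unit (x • v)) 1 := by
      ext (a | a) (b | b) <;> simp [T, e, updateRow_apply]
    rw [this, det_fromBlocks_one₂₂]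
    congr 1
    ext a b
    simp [vecMulVec_apply, sub_eq_add_neg, Matrix.mul_apply]
  have hlast : T.updateRow (Sum.inr ()) e = fromBlocks N (-replicateCol Unit u) 0 1 := by
    ext (a | a) (b | b) <;> simp [T, e, updateRow_apply]
  rw [hbordered, det_updateRow_add, det_updateRow_smul, updateRow_eq_self, hlast,
    det_fromBlocks_zero₂₁, det_one, mul_one, add_comm]

theorem Subalgebra.det_mem {R A n : Type*} [CommRing R] [CommRing A] [Algebra R A] [Fintype n]
    [DecidableEq n] (S : Subalgebra R A) (M : Matrix n n A) (hM : ∀ a b, M a b ∈ S) :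
    M.det ∈ S := by
  have : M = (S.val : S →+* A).mapMatrix (Matrix.of fun a b => (⟨M a b, hM a b⟩ : S)) := rfl
  rw [this, ← RingHom.map_det]
  exact SetLike.coe_mem _

namespace MvPolynomial

variable {σ R : Type*} [CommRing R]

theorem X_mem_supported_of_mem {s : Set σ} {j : σ} (hj : j ∈ s) :
    (X j : MvPolynomial σ R) ∈ supported R s :=
  Algebra.subset_adjoin (Set.mem_image_of_mem X hj)

theorem pderiv_eq_zero_of_mem_supported {s : Set σ} {p : MvPolynomial σ R}
    (hp : p ∈ supported R s) {i : σ} (hi : i ∉ s) : pderiv i p = 0 :=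
  pderiv_eq_zero_of_notMem_vars fun h => hi (mem_supported.mp hp h)

theorem pderiv_mem_supported {s : Set σ} {p : MvPolynomial σ R} (hp : p ∈ supported R s)
    (j : σ) : pderiv j p ∈ supported R s := by
  by_cases hj : j ∈ s
  · rw [supported_eq_range_rename] at hp ⊢
    obtain ⟨q, rfl⟩ := hp
    have h := pderiv_rename (R := R) (Subtype.val_injective (p := (· ∈ s))) ⟨j, hj⟩ q
    simp only at h
    rw [AlgHom.toRingHom_eq_coe, RingHom.coe_coe, h]
    exact AlgHom.mem_range_self _ _
  · rw [pderiv_eq_zero_of_mem_supported hp hj]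
    exact zero_mem _

theorem eval_update_of_mem_supported [DecidableEq σ] {s : Set σ} {p : MvPolynomial σ R}
    (hp : p ∈ supported R s) {i : σ} (hi : i ∉ s) (g : σ → R) (a : R) :
    eval (Function.update g i a) p = eval g p := by
  rw [supported_eq_range_rename] at hp
  obtain ⟨q, rfl⟩ := hp
  rw [AlgHom.toRingHom_eq_coe, RingHom.coe_coe, eval_rename, eval_rename]
  congr 2
  funext ⟨j, hj⟩
  exact Function.update_of_ne (ne_of_mem_of_not_mem hj hi) _ _

theorem pderiv_add_X_mul_of_mem_supported {i : σ} {q r : MvPolynomial σ R}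
    (hq : q ∈ supported R {i}ᶜ) (hr : r ∈ supported R {i}ᶜ) :
    pderiv i (q + X i * r) = r := by
  have hi : i ∉ ({i}ᶜ : Set σ) := by simp
  rw [map_add, pderiv_mul, pderiv_eq_zero_of_mem_supported hq hi,
    pderiv_eq_zero_of_mem_supported hr hi, pderiv_X_self]
  ring

def IsAffineIn (i : σ) (p : MvPolynomial σ R) : Prop :=
  ∃ q ∈ supported R {i}ᶜ, ∃ r ∈ supported R {i}ᶜ, p = q + X i * r

variable {i : σ} {p : MvPolynomial σ R}

theorem IsAffineIn.sub {p' : MvPolynomial σ R} (hp : IsAffineIn i p) (hp' : IsAffineIn i p') :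
    IsAffineIn i (p - p') := by
  obtain ⟨q, hq, r, hr, rfl⟩ := hp
  obtain ⟨q', hq', r', hr', rfl⟩ := hp'
  exact ⟨q - q', sub_mem hq hq', r - r', sub_mem hr hr', by ring⟩

theorem IsAffineIn.pderiv (hp : IsAffineIn i p) (j : σ) :
    IsAffineIn i (MvPolynomial.pderiv j p) := by
  obtain ⟨q, hq, r, hr, rfl⟩ := hp
  obtain rfl | hji := eq_or_ne j i
  · rw [pderiv_add_X_mul_of_mem_supported hq hr]
    exact ⟨r, hr, 0, zero_mem _, by ring⟩
  · refine ⟨pderiv j q, pderiv_mem_supported hq j, pderiv j r, pderiv_mem_supported hr j, ?_⟩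
    rw [map_add, pderiv_mul, pderiv_X_of_ne hji.symm]
    ring

theorem IsAffineIn.eval_sub_eval_pderiv [DecidableEq σ] (hp : IsAffineIn i p) (g : σ → R) :
    eval g p - eval g (MvPolynomial.pderiv i p) = eval (Function.update g i (g i - 1)) p := by
  obtain ⟨q, hq, r, hr, rfl⟩ := hp
  have hi : i ∉ ({i}ᶜ : Set σ) := by simp
  simp only [pderiv_add_X_mul_of_mem_supported hq hr, map_add, map_mul, eval_X,
    Function.update_self, eval_update_of_mem_supported hq hi, eval_update_of_mem_supported hr hi]
  ring

theorem IsAffineIn.prod_one_sub_pderiv (hp : IsAffineIn i p) (L : List σ) :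
    IsAffineIn i ((L.map fun j =>
      (1 - (MvPolynomial.pderiv j).toLinearMap : Module.End R _)).prod p) := by
  induction L with
  | nil => simpa using hp
  | cons j L ih =>
    simp only [List.map_cons, List.prod_cons, Module.End.mul_apply, LinearMap.sub_apply,
      Module.End.one_apply, Derivation.coeFn_coe]
    exact ih.sub (ih.pderiv j)

theorem eval_prod_one_sub_pderiv [DecidableEq σ] (L : List σ) (hL : L.Nodup)
    (hp : ∀ i ∈ L, IsAffineIn i p) (g : σ → R) :
    eval g ((L.map fun j => (1 - (pderiv j).toLinearMap : Module.End R _)).prod p) =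
      eval (fun j => if j ∈ L then g j - 1 else g j) p := by
  induction L generalizing g with
  | nil => simp
  | cons i L ih =>
    obtain ⟨hiL, hL⟩ := List.nodup_cons.mp hL
    simp only [List.map_cons, List.prod_cons, Module.End.mul_apply, LinearMap.sub_apply,
      Module.End.one_apply, Derivation.coeFn_coe, map_sub]
    rw [((hp i List.mem_cons_self).prod_one_sub_pderiv L).eval_sub_eval_pderiv,
      ih hL (fun j hj => hp j (List.mem_cons_of_mem i hj))]
    congr 2
    funext j
    obtain rfl | hji := eq_or_ne j i <;> simp [Function.update_of_ne, *]

variable {n : Type*} [Fintype n] [DecidableEq n]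

theorem isAffineIn_det_map_C_add_sum_X_smul [Fintype σ] (B : Matrix n n R)
    (A : σ → Matrix n n R) (hA : ∃ u v, A i = vecMulVec u v) :
    IsAffineIn i (B.map C + ∑ j, (X j : MvPolynomial σ R) • (A j).map C).det := by
  classical
  obtain ⟨u, v, hAi⟩ := hA
  set S := supported R ({i}ᶜ : Set σ)
  have hC : ∀ c : R, (C c : MvPolynomial σ R) ∈ S := S.algebraMap_mem
  set N : Matrix n n (MvPolynomial σ R) :=
    B.map C + ∑ j ∈ Finset.univ.erase i, (X j : MvPolynomial σ R) • (A j).map C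
  have hN : ∀ a b, N a b ∈ S := fun a b => by
    simp only [N, Matrix.add_apply, map_apply, Matrix.sum_apply, Matrix.smul_apply, smul_eq_mul]
    exact add_mem (hC _) (sum_mem fun j hj =>
      mul_mem (X_mem_supported_of_mem (Finset.ne_of_mem_erase hj)) (hC _))
  have hsplit : B.map C + ∑ j, (X j : MvPolynomial σ R) • (A j).map C =
      N + (X i : MvPolynomial σ R) • vecMulVec (C ∘ u) (C ∘ v) := by
    rw [← Finset.add_sum_erase _ _ (Finset.mem_univ i), hAi, vecMulVec_map, add_left_comm,
      add_comm]
  rw [hsplit, det_add_smul_vecMulVec]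
  refine ⟨_, S.det_mem _ hN, _, S.det_mem _ ?_, rfl⟩
  rintro (a | a) (b | b) <;> simp [hN, hC]

theorem eval_prod_one_sub_pderiv_det {d : ℕ} (B : Matrix n n R) (A : Fin d → Matrix n n R)
    (hA : ∀ i, ∃ u v, A i = vecMulVec u v) :
    eval (fun _ => 0) ((List.ofFn fun i =>
        (1 - (pderiv i).toLinearMap : Module.End R (MvPolynomial (Fin d) R))).prod
      (B.map C + ∑ i, (X i : MvPolynomial (Fin d) R) • (A i).map C).det) =
      (B - ∑ i, A i).det := by
  rw [List.ofFn_eq_map, eval_prod_one_sub_pderiv _ (List.nodup_finRange d)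
    (fun i _ => isAffineIn_det_map_C_add_sum_X_smul B A (hA i)), RingHom.map_det]
  congr 1
  ext a b
  simp [sub_eq_add_neg, Matrix.sum_apply]

end MvPolynomial

/-- for rank-one matrices `A₁, ..., A_d ∈ M_m(ℂ)` with sum `A`, the
characteristic polynomial `p_A(z) = det(z·1_m - A)` equals the mixed characteristic
polynomial `μ[A₁,...,A_d](z)`. -/
theorem statement7 {m d : ℕ} (A : Fin d → Matrix (Fin m) (Fin m) ℂ)
    (hA : ∀ i, (A i).rank = 1) :
    Matrix.charpoly (∑ i, A i) = mixedCharPoly A := by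
  have hM : Matrix.of (fun a b : Fin m =>
        (if a = b then (C Polynomial.X : MvPolynomial (Fin d) (Polynomial ℂ)) else 0) +
          ∑ i : Fin d, X i * C (Polynomial.C (A i a b))) =
      (scalar (Fin m) Polynomial.X).map C +
        ∑ i, (X i : MvPolynomial (Fin d) (Polynomial ℂ)) •
          ((A i).map Polynomial.C).map C := by
    ext1 a b
    simp [Matrix.sum_apply, diagonal_apply]
  rw [mixedCharPoly, hM, eval_prod_one_sub_pderiv_det]
  · simp [Matrix.charpoly, Matrix.charmatrix, map_sum]
  · intro i
    obtain ⟨u, v, huv⟩ := (A i).exists_eq_vecMulVec_of_rank_le_one (hA i).le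
    exact ⟨_, _, by rw [huv, vecMulVec_map]⟩
end

section
/- Let Ω₁,...,Ω_d be finite probability spaces, let Ω be their product with the product probability, and for each i let A_i : Ω_i → M_m(ℂ) take values in the positive semidefinite matrices of rank 1 (so that, as random variables on Ω, the A_i are independent). Let A = Σ_{i=1}^d A_i. Then the coefficientwise expectation of the characteristic polynomial of A satisfies 𝔼 p_A(z) = μ[𝔼A₁,...,𝔼A_d](z), the mixed characteristic polynomial of the expectations 𝔼A_i. -/
/-!
Expanding `det (z • 1 + ∑ i, z_i • B_i)` multilinearly in the rows gives
`∑_f z^{α f} det N_f`, where `f` chooses for every row whether it is taken from `z • 1` or from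
some `B_i`, `N_f` is the resulting matrix with `z` kept, and `(α f)_i` counts the rows taken
from `B_i`. The characteristic polynomial of `∑ B_i` is the value at `z_i = -1`, and `μ[B]`
weights the term of `f` by `∏_i s((α f)_i)` with `s 0 = 1`, `s 1 = -1`, `s k = 0` for `k ≥ 2`.
If every `B_i` has rank at most one, the terms with some `(α f)_i ≥ 2` vanish (two proportional
rows), so `p_{∑ B_i} = μ[B]`. Moreover `μ[B]` is affine in each `B_i`, since only terms using
each `B_i` in at most one row survive; so its expectation over independent `B_i` is its value at
the expectations, which one checks by averaging one coordinate at a time.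
-/

open MvPolynomial
open scoped ComplexOrder

section Averaging

open Function

variable {ι : Type*} [Fintype ι] [DecidableEq ι] {Ω : ι → Type*} [∀ i, Fintype (Ω i)]
  {S V : Type*} [CommSemiring S] [AddCommMonoid V] [Module S V]
  {W : ∀ i, Ω i → S}

theorem sum_prod_smul_sum_update (hW : ∀ i, ∑ x, W i x = 1) (i : ι) (F : (∀ j, Ω j) → V) :
    ∑ ω : ∀ j, Ω j, (∏ j, W j (ω j)) • ∑ x, W i x • F (update ω i x) =
      ∑ ω : ∀ j, Ω j, (∏ j, W j (ω j)) • F ω := by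
  -- `(ω, x) ↦ (update ω i x, ω i)` is an involution preserving the weight `W(ω) W_i(x)`
  let hinv : Involutive fun p : (∀ j, Ω j) × Ω i => (update p.1 i p.2, p.1 i) :=
    fun p => by simp
  have hweight : ∀ (ω : ∀ j, Ω j) (x : Ω i),
      (∏ j, W j (ω j)) * W i x = (∏ j, W j (update ω i x j)) * W i (ω i) := by
    intro ω x
    have hrest : ∏ j ∈ Finset.univ.erase i, W j (update ω i x j) =
        ∏ j ∈ Finset.univ.erase i, W j (ω j) :=
      Finset.prod_congr rfl fun j hj => by rw [update_of_ne (Finset.ne_of_mem_erase hj)]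
    rw [← Finset.mul_prod_erase _ (fun j => W j (ω j)) (Finset.mem_univ i),
      ← Finset.mul_prod_erase _ (fun j => W j (update ω i x j)) (Finset.mem_univ i),
      hrest, update_self]
    ring
  calc
    _ = ∑ p : (∀ j, Ω j) × Ω i,
          ((∏ j, W j (p.1 j)) * W i p.2) • F (update p.1 i p.2) := by
      simp_rw [Finset.smul_sum, smul_smul, Fintype.sum_prod_type]
    _ = ∑ p : (∀ j, Ω j) × Ω i, ((∏ j, W j (p.1 j)) * W i p.2) • F p.1 := by
      refine (Finset.sum_congr rfl fun p _ => ?_).trans (Equiv.sum_comp hinv.toPerm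
        fun p => ((∏ j, W j (p.1 j)) * W i p.2) • F p.1)
      exact congrArg (· • _) (hweight p.1 p.2)
    _ = _ := by
      rw [Fintype.sum_prod_type]
      exact Finset.sum_congr rfl fun ω _ => by
        simp only [← Finset.sum_smul, ← Finset.mul_sum, hW, mul_one]

theorem sum_prod_smul_apply_eq_apply_sum_smul {E : Type*} [AddCommMonoid E] [Module S E]
    (hW : ∀ i, ∑ x, W i x = 1) (A : ∀ i, Ω i → E) (Φ : (ι → E) → V)
    (hΦ : ∀ i (B : ι → E), ∑ x, W i x • Φ (update B i (A i x)) =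
      Φ (update B i (∑ x, W i x • A i x))) :
    ∑ ω : ∀ i, Ω i, (∏ i, W i (ω i)) • Φ (fun i => A i (ω i)) =
      Φ (fun i => ∑ x, W i x • A i x) := by
  let hybrid (s : Finset ι) (ω : ∀ i, Ω i) : ι → E :=
    fun i => if i ∈ s then ∑ x, W i x • A i x else A i (ω i)
  have hhybrid : ∀ s, ∑ ω : ∀ i, Ω i, (∏ i, W i (ω i)) • Φ (hybrid s ω) =
      ∑ ω : ∀ i, Ω i, (∏ i, W i (ω i)) • Φ (fun i => A i (ω i)) := by
    intro s
    induction s using Finset.induction_on with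
    | empty => simp [hybrid]
    | insert i s hi ih =>
      have hins : ∀ ω,
          hybrid (insert i s) ω = update (hybrid s ω) i (∑ x, W i x • A i x) :=
        fun ω => by ext j; by_cases hj : j = i <;> simp [hybrid, hj]
      have hupd : ∀ ω x, update (hybrid s ω) i (A i x) = hybrid s (update ω i x) :=
        fun ω x => by ext j; by_cases hj : j = i <;> simp [hybrid, hj, hi]
      simp_rw [hins, ← hΦ, hupd]
      rw [sum_prod_smul_sum_update hW i (fun ω => Φ (hybrid s ω)), ih]
  have htotal : ∑ ω : ∀ i, Ω i, ∏ i, W i (ω i) = 1 := by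
    rw [← Fintype.prod_sum, Finset.prod_eq_one fun i _ => hW i]
  rw [← hhybrid Finset.univ]
  simp only [hybrid, Finset.mem_univ, if_true]
  rw [← Finset.sum_smul, htotal, one_smul]

end Averaging

namespace Matrix

open Function

variable {n κ R : Type*}

def selectRows (M : κ → Matrix n n R) (f : n → κ) : Matrix n n R :=
  of fun a => M (f a) a

section CommRing

variable [Fintype n] [DecidableEq n] [CommRing R]

theorem det_sum_eq_sum_det_selectRows [Fintype κ] (M : κ → Matrix n n R) :
    (∑ k, M k).det = ∑ f : n → κ, (selectRows M f).det := by
  have hrows : ∑ k, M k = fun a => ∑ k, M k a := by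
    ext a b
    simp [sum_apply]
  rw [hrows]
  exact (detRowAlternating : (n → R) [⋀^n]→ₗ[R] R).toMultilinearMap.map_sum fun a k => M k a

theorem det_eq_zero_of_rows_eq_smul (M : Matrix n n R) {a a' : n} (h : a ≠ a') (v : n → R)
    {c c' : R} (ha : M a = c • v) (ha' : M a' = c' • v) : M.det = 0 := by
  have hM : M = (M.updateRow a (c • v)).updateRow a' (c' • v) := by
    rw [← ha, ← ha', updateRow_eq_self, updateRow_eq_self]
  have hrow : ((M.updateRow a' v).updateRow a v) a = ((M.updateRow a' v).updateRow a v) a' := by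
    rw [updateRow_self, updateRow_ne h.symm, updateRow_self]
  rw [hM, det_updateRow_smul, updateRow_comm _ h, det_updateRow_smul, det_zero_of_row_eq h hrow,
    mul_zero, mul_zero]

end CommRing

theorem exists_row_eq_smul_of_rank_le_one {K m n : Type*} [Field K] [Fintype m]
    [Fintype n] {M : Matrix m n K} (h : M.rank ≤ 1) :
    ∃ v : n → K, ∀ a, ∃ c : K, M a = c • v := by
  rw [rank_eq_finrank_span_row] at h
  obtain ⟨v, hv⟩ := finrank_le_one_iff.mp h
  refine ⟨v, fun a => ?_⟩
  obtain ⟨c, hc⟩ := hv ⟨M a, Submodule.subset_span (Set.mem_range_self a)⟩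
  exact ⟨c, (congrArg Subtype.val hc).symm⟩

variable [DecidableEq κ] {M : κ → Matrix n n R} {f : n → κ} {k : κ}

theorem selectRows_update_of_forall_ne (hf : ∀ a, f a ≠ k) (N : Matrix n n R) :
    selectRows (update M k N) f = selectRows M f := by
  ext a b
  simp [selectRows, update_of_ne (hf a)]

theorem selectRows_update_of_eq [DecidableEq n] {a₀ : n} (ha₀ : f a₀ = k)
    (hf : ∀ a, f a = k → a = a₀) (N : Matrix n n R) :
    selectRows (update M k N) f = (selectRows M f).updateRow a₀ (N a₀) := by
  ext a b
  by_cases ha : a = a₀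
  · subst ha
    simp [selectRows, ha₀]
  · simp [selectRows, ha, update_of_ne fun h => ha (hf a h)]

theorem det_selectRows_update_sum [Fintype n] [DecidableEq n] [CommRing R] {S ι : Type*}
    [CommSemiring S] [Algebra S R] [Fintype ι] (hf : ∀ a a', f a = k → f a' = k → a = a')
    (W : ι → S) (hW : ∑ x, W x = 1) (N : ι → Matrix n n R) :
    ∑ x, W x • (selectRows (update M k (N x)) f).det =
      (selectRows (update M k (∑ x, W x • N x)) f).det := by
  by_cases hk : ∃ a₀, f a₀ = k
  · obtain ⟨a₀, ha₀⟩ := hk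
    have hrow : (∑ x, W x • N x) a₀ = ∑ x, W x • N x a₀ := by
      ext b
      simp [sum_apply]
    let L := (detRowAlternating : (n → R) [⋀^n]→ₗ[R] R).toMultilinearMap.toLinearMap
      (selectRows M f) a₀
    simp only [selectRows_update_of_eq ha₀ fun a ha => hf a a₀ ha ha₀, hrow]
    change ∑ x, W x • L (N x a₀) = L (∑ x, W x • N x a₀)
    simp only [map_sum, LinearMap.map_smul_of_tower]
  · push Not at hk
    simp only [selectRows_update_of_forall_ne hk, ← Finset.sum_smul, hW, one_smul]

end Matrix

section MixedSign

variable {R : Type*} [CommRing R]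

/-- `mixedSign k` is the value at `z = 0` of `(1 - d/dz) z ^ k`. -/
def mixedSign (k : ℕ) : R := if k = 0 then 1 else if k = 1 then -1 else 0

theorem mixedSign_eq_zero_pow_sub (k : ℕ) : (mixedSign k : R) = 0 ^ k - k * 0 ^ (k - 1) := by
  rcases k with _ | _ | k <;> simp [mixedSign]

theorem mixedSign_of_le_one {k : ℕ} (hk : k ≤ 1) :
    (mixedSign k : R) = (-1) ^ k := by
  interval_cases k <;> simp [mixedSign]

theorem mixedSign_of_one_lt {k : ℕ} (hk : 1 < k) :
    (mixedSign k : R) = 0 := by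
  simp [mixedSign, show k ≠ 0 by omega, show k ≠ 1 by omega]

theorem eval_zero_prod_one_sub_pderiv_monomial {σ : Type*} [Fintype σ] [DecidableEq σ]
    (l : List σ) (hl : l.Nodup) (α : σ →₀ ℕ) (q : R) :
    eval 0 ((l.map fun i => (1 - (pderiv i).toLinearMap : Module.End R (MvPolynomial σ R))).prod
        (monomial α q)) =
      (∏ i, if i ∈ l then mixedSign (α i) else 0 ^ α i) * q := by
  induction l using List.reverseRecOn generalizing α q with
  | nil =>
    rw [List.map_nil, List.prod_nil, Module.End.one_apply, eval_monomial,
      Finsupp.prod_fintype _ _ fun _ => pow_zero _]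
    simp [mul_comm]
  | append_singleton l i₀ ih =>
    -- the last factor `1 - ∂_{i₀}` is the first to act
    obtain ⟨hl, hi₀⟩ : l.Nodup ∧ i₀ ∉ l := by
      simp only [List.nodup_append, List.nodup_singleton, List.mem_singleton] at hl
      exact ⟨hl.1, fun h => hl.2.2 i₀ h i₀ rfl rfl⟩
    simp only [List.map_append, List.map_singleton, List.prod_append, List.prod_singleton,
      Module.End.mul_apply, LinearMap.sub_apply, Module.End.one_apply,
      Derivation.coeFn_coe, pderiv_monomial, map_sub, ih hl]
    rw [Fintype.prod_eq_mul_prod_compl i₀, Fintype.prod_eq_mul_prod_compl i₀,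
      Fintype.prod_eq_mul_prod_compl i₀]
    have hrest : ∏ i ∈ {i₀}ᶜ,
        (if i ∈ l ++ [i₀] then mixedSign (α i) else (0 : R) ^ α i) =
        ∏ i ∈ {i₀}ᶜ, (if i ∈ l then mixedSign (α i) else (0 : R) ^ α i) :=
      Finset.prod_congr rfl fun i hi => by simp_all
    have hrest' : ∏ i ∈ {i₀}ᶜ,
        (if i ∈ l then mixedSign ((α - Finsupp.single i₀ 1 : σ →₀ ℕ) i)
          else (0 : R) ^ (α - Finsupp.single i₀ 1 : σ →₀ ℕ) i) =
        ∏ i ∈ {i₀}ᶜ, (if i ∈ l then mixedSign (α i) else (0 : R) ^ α i) :=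
      Finset.prod_congr rfl fun i hi => by simp_all
    rw [hrest, hrest']
    simp only [hi₀, List.mem_append, List.mem_singleton, or_true, if_true, if_false,
      Finsupp.tsub_apply, Finsupp.single_eq_same, mixedSign_eq_zero_pow_sub]
    ring

end MixedSign

noncomputable section MixedMatrix

variable {n ι R : Type*} [Fintype n]

def optionSingle (o : Option ι) : ι →₀ ℕ :=
  o.elim 0 fun i => Finsupp.single i 1

def rowMultiplicity (f : n → Option ι) : ι →₀ ℕ :=
  ∑ a, optionSingle (f a)

theorem rowMultiplicity_apply [DecidableEq ι] (f : n → Option ι) (i : ι) :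
    rowMultiplicity f i = (Finset.univ.filter fun a => f a = some i).card := by
  rw [rowMultiplicity, Finsupp.finsetSum_apply, Finset.card_filter]
  refine Finset.sum_congr rfl fun a _ => ?_
  cases f a <;> simp [optionSingle, Finsupp.single_apply]

variable [DecidableEq n] [CommRing R]

/-- The summands of `mixedMatrix B` with the variables removed: `none` stands for `z • 1` and
`some i` for `z_i • B i`. -/
def charFamily (B : ι → Matrix n n R) : Option ι → Matrix n n (Polynomial R) :=
  fun o => o.elim (Matrix.scalar n Polynomial.X) fun i => (B i).map Polynomial.C

theorem charFamily_update [DecidableEq ι] (B : ι → Matrix n n R) (i : ι) (N : Matrix n n R) :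
    charFamily (Function.update B i N) =
      Function.update (charFamily B) (some i) (N.map Polynomial.C) := by
  ext (_ | j) : 1
  · simp [charFamily]
  · by_cases hj : j = i
    · subst hj; simp [charFamily]
    · simp [charFamily, hj]

variable [Fintype ι]

def mixedMatrix (B : ι → Matrix n n R) : Matrix n n (MvPolynomial ι (Polynomial R)) :=
  Matrix.of fun a b =>
    (if a = b then C Polynomial.X else 0) + ∑ i, X i * C (Polynomial.C (B i a b))

theorem mixedMatrix_eq_sum (B : ι → Matrix n n R) :
    mixedMatrix B =
      ∑ o, monomial (optionSingle o) (1 : Polynomial R) • (charFamily B o).map C := by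
  ext a b
  by_cases hab : a = b <;>
    simp [mixedMatrix, charFamily, optionSingle, Fintype.sum_option, Matrix.sum_apply, hab, X]

theorem det_mixedMatrix (B : ι → Matrix n n R) :
    (mixedMatrix B).det =
      ∑ f : n → Option ι,
        monomial (rowMultiplicity f) (Matrix.selectRows (charFamily B) f).det := by
  rw [mixedMatrix_eq_sum, Matrix.det_sum_eq_sum_det_selectRows]
  refine Finset.sum_congr rfl fun f _ => ?_
  have hrows : Matrix.selectRows (fun o =>
        monomial (optionSingle o) (1 : Polynomial R) • (charFamily B o).map C) f =
      Matrix.of fun a b => monomial (optionSingle (f a)) 1 *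
        ((Matrix.selectRows (charFamily B) f).map C) a b := by
    ext a b
    simp [Matrix.selectRows]
  have hC : ((Matrix.selectRows (charFamily B) f).map
      (C : Polynomial R →+* MvPolynomial ι (Polynomial R))).det =
      C (Matrix.selectRows (charFamily B) f).det :=
    (RingHom.map_det _ _).symm
  rw [hrows, Matrix.det_mul_column, hC, ← monomial_sum_one, rowMultiplicity, mul_comm,
    C_mul_monomial, mul_one]

end MixedMatrix

theorem det_selectRows_charFamily_eq_zero {n ι K : Type*} [Fintype n] [DecidableEq n]
    [DecidableEq ι] [Field K] {B : ι → Matrix n n K}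
    {f : n → Option ι} {i : ι} (hB : (B i).rank ≤ 1) (hf : 1 < rowMultiplicity f i) :
    (Matrix.selectRows (charFamily B) f).det = 0 := by
  rw [rowMultiplicity_apply, Finset.one_lt_card] at hf
  obtain ⟨a, ha, a', ha', hne⟩ := hf
  obtain ⟨v, hv⟩ := Matrix.exists_row_eq_smul_of_rank_le_one hB
  have hrow : ∀ b, f b = some i → ∃ c : K,
      Matrix.selectRows (charFamily B) f b = Polynomial.C c • fun x => Polynomial.C (v x) := by
    intro b hb
    obtain ⟨c, hc⟩ := hv b
    exact ⟨c, by ext x; simp [Matrix.selectRows, charFamily, hb, congrFun hc x]⟩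
  obtain ⟨c, hc⟩ := hrow a (by simpa using ha)
  obtain ⟨c', hc'⟩ := hrow a' (by simpa using ha')
  exact Matrix.det_eq_zero_of_rows_eq_smul _ hne _ hc hc'

theorem charpoly_sum_eq_sum {n ι R : Type*} [Fintype n] [DecidableEq n] [Fintype ι] [CommRing R]
    (B : ι → Matrix n n R) :
    (∑ i, B i).charpoly = ∑ f : n → Option ι,
      (∏ i, (-1) ^ rowMultiplicity f i) * (Matrix.selectRows (charFamily B) f).det := by
  have hmap : (∑ i, B i).charmatrix = (eval fun _ => -1).mapMatrix (mixedMatrix B) := by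
    ext a b
    by_cases hab : a = b <;>
      simp [mixedMatrix, hab, Matrix.sum_apply, sub_eq_add_neg]
  rw [Matrix.charpoly, hmap, ← RingHom.map_det, det_mixedMatrix, map_sum]
  simp [eval_monomial, Finsupp.prod_fintype, mul_comm]

section MixedCharPoly

variable {m d : ℕ}

theorem mixedCharPoly_eq_sum (B : Fin d → Matrix (Fin m) (Fin m) ℂ) :
    mixedCharPoly B = ∑ f : Fin m → Option (Fin d),
      (∏ i, mixedSign (rowMultiplicity f i)) * (Matrix.selectRows (charFamily B) f).det := by
  change eval 0 ((List.ofFn fun i : Fin d => (1 - (pderiv i).toLinearMap :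
    Module.End (Polynomial ℂ) (MvPolynomial (Fin d) (Polynomial ℂ)))).prod
      (mixedMatrix B).det) = _
  rw [det_mixedMatrix, map_sum, map_sum, List.ofFn_eq_map]
  simp only [eval_zero_prod_one_sub_pderiv_monomial _ (List.nodup_finRange d), List.mem_finRange,
    if_true]

theorem charpoly_sum_eq_mixedCharPoly (B : Fin d → Matrix (Fin m) (Fin m) ℂ)
    (hB : ∀ i, (B i).rank ≤ 1) : (∑ i, B i).charpoly = mixedCharPoly B := by
  rw [charpoly_sum_eq_sum, mixedCharPoly_eq_sum]
  refine Finset.sum_congr rfl fun f _ => ?_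
  by_cases hf : ∀ i, rowMultiplicity f i ≤ 1
  · simp only [mixedSign_of_le_one (hf _)]
  · push Not at hf
    obtain ⟨i, hi⟩ := hf
    rw [det_selectRows_charFamily_eq_zero (hB i) hi, mul_zero, mul_zero]

theorem mixedCharPoly_update_sum (B : Fin d → Matrix (Fin m) (Fin m) ℂ) (i : Fin d) {κ : Type*}
    [Fintype κ] (W : κ → ℂ) (hW : ∑ x, W x = 1) (M : κ → Matrix (Fin m) (Fin m) ℂ) :
    ∑ x, W x • mixedCharPoly (Function.update B i (M x)) =
      mixedCharPoly (Function.update B i (∑ x, W x • M x)) := by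
  simp only [mixedCharPoly_eq_sum, Finset.smul_sum]
  rw [Finset.sum_comm]
  refine Finset.sum_congr rfl fun f _ => ?_
  by_cases hf : ∀ j, rowMultiplicity f j ≤ 1
  · have hfi : ∀ a a', f a = some i → f a' = some i → a = a' := by
      have := hf i
      rw [rowMultiplicity_apply, Finset.card_le_one] at this
      exact fun a a' ha ha' => this a (by simpa using ha) a' (by simpa using ha')
    have hmap : (∑ x, W x • M x).map Polynomial.C = ∑ x, W x • (M x).map Polynomial.C := by
      ext a b
      simp [Matrix.sum_apply, Polynomial.smul_C]
    simp only [← mul_smul_comm, ← Finset.mul_sum, charFamily_update, hmap]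
    rw [Matrix.det_selectRows_update_sum hfi W hW]
  · push Not at hf
    obtain ⟨j, hj⟩ := hf
    have hzero : ∏ j, (mixedSign (rowMultiplicity f j) : Polynomial ℂ) = 0 :=
      Finset.prod_eq_zero (Finset.mem_univ j) (mixedSign_of_one_lt hj)
    simp [hzero]
end MixedCharPoly

theorem statement9_general {m d : ℕ} (Ω : Fin d → Type) [∀ i, Fintype (Ω i)]
    (w : ∀ i, Ω i → ℝ) (hw1 : ∀ i, ∑ ω : Ω i, w i ω = 1)
    (A : ∀ i, Ω i → Matrix (Fin m) (Fin m) ℂ)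
    (hrk : ∀ i ω, (A i ω).rank = 1) :
    ∑ ω : ∀ i, Ω i, (∏ i, w i (ω i)) • Matrix.charpoly (∑ i, A i (ω i)) =
      mixedCharPoly (fun i => ∑ ω : Ω i, w i ω • A i ω) := by
  have hW : ∀ i, ∑ x, (w i x : ℂ) = 1 := fun i => by exact_mod_cast hw1 i
  calc
    _ = ∑ ω : ∀ i, Ω i,
          (∏ i, (w i (ω i) : ℂ)) • mixedCharPoly (fun i => A i (ω i)) := by
      simp only [charpoly_sum_eq_mixedCharPoly _ fun i => (hrk i _).le, ← Complex.coe_smul,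
        Complex.ofReal_prod]
    _ = mixedCharPoly fun i => ∑ x, (w i x : ℂ) • A i x :=
      sum_prod_smul_apply_eq_apply_sum_smul hW A mixedCharPoly fun i B =>
        mixedCharPoly_update_sum B i _ (hW i) (A i)
    _ = _ := by simp only [Complex.coe_smul]

/-- let `Ω₁, ..., Ω_d` be finite probability spaces (`Ω i` with weights `w i`
summing to `1`), and `A i : Ω i → M_m(ℂ)` rank-one positive-semidefinite-valued maps, viewed
as independent random matrices on the product `Ω = ∀ i, Ω i` with product probability.  With
`A = ∑ i, A i`, the coefficientwise expectation of the characteristic polynomial of `A` is the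
mixed characteristic polynomial of the (entrywise) expectations `𝔼 A_i`. -/
theorem statement9 {m d : ℕ} (Ω : Fin d → Type) [∀ i, Fintype (Ω i)]
    (w : ∀ i, Ω i → ℝ) (hw0 : ∀ i ω, 0 ≤ w i ω) (hw1 : ∀ i, ∑ ω : Ω i, w i ω = 1)
    (A : ∀ i, Ω i → Matrix (Fin m) (Fin m) ℂ)
    (hpsd : ∀ i ω, (A i ω).PosSemidef) (hrk : ∀ i ω, (A i ω).rank = 1) :
    ∑ ω : ∀ i, Ω i, (∏ i, w i (ω i)) • Matrix.charpoly (∑ i, A i (ω i)) =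
      mixedCharPoly (fun i => ∑ ω : Ω i, w i ω • A i ω) :=
  statement9_general Ω w hw1 A hrk
end
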